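/- Let 1 ≤ n < d, c > 0, ε > 0. Let E₀ ⊂ ℝ^d be an n-ADR set with Hⁿ(E₀) ≥ c, let E₁ ⊂ E₀ ∩ B(0,1) be an Hⁿ-measurable subset, and define E_{1,ε} := {x ∈ E₁ : Hⁿ(E₁ ∩ B(x, r_x)) ≤ ε r_xⁿ for some radius 0 < r_x ≤ 1}. Then Hⁿ(E_{1,ε}) ≤ Kε, where K depends only on n, d, c and the ADR constants of E₀. -/

import Mathlib

open MeasureTheory Metric Module Set
open scoped ENNReal NNReal RealInnerProductSpace

noncomputable section

/-- Euclidean space `ℝ^d`. -/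
abbrev Euc (d : ℕ) : Type := EuclideanSpace ℝ (Fin d)

/-- Orthogonal projection onto a subspace, as a map `ℝ^d → ℝ^d`. -/
noncomputable def projCLM {d : ℕ} (V : Submodule ℝ (Euc d)) : Euc d →L[ℝ] Euc d :=
  V.subtypeL.comp V.orthogonalProjectionOnto

/-- `E` is `n`-Ahlfors–David regular with constants `C₁ ≤ C₂`. -/
def IsADR {d : ℕ} (n : ℕ) (C₁ C₂ : ℝ) (E : Set (Euc d)) : Prop :=
  0 < C₁ ∧ C₁ ≤ C₂ ∧ ∀ x ∈ E, ∀ r : ℝ, 0 < r → ENNReal.ofReal r ≤ EMetric.diam E →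
    ENNReal.ofReal (C₁ * r ^ n) ≤ μH[n] (E ∩ closedBall x r) ∧
      μH[n] (E ∩ closedBall x r) ≤ ENNReal.ofReal (C₂ * r ^ n)

/-- `Γ` is an `n`-dimensional Lipschitz graph with Lipschitz constant at most `M`:
`Γ = {p + A p : p ∈ P}` for an `n`-dimensional subspace `P` and `M`-Lipschitz `A : P → P^⊥`. -/
def IsLipGraph {d : ℕ} (n : ℕ) (M : ℝ≥0) (Γ : Set (Euc d)) : Prop :=
  ∃ (P : Submodule ℝ (Euc d)) (A : P → Pᗮ), finrank ℝ P = n ∧ LipschitzWith M A ∧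
    Γ = {x | ∃ p : P, x = (p : Euc d) + (A p : Euc d)}

/-- `E` has big pieces of Lipschitz graphs with constants `M` and `δ`. -/
def HasBPLG {d : ℕ} (n : ℕ) (M : ℝ≥0) (δ : ℝ) (E : Set (Euc d)) : Prop :=
  0 < δ ∧ ∀ x ∈ E, ∀ r : ℝ, 0 < r → ENNReal.ofReal r ≤ EMetric.diam E →
    ∃ Γ : Set (Euc d), IsLipGraph n M Γ ∧
      ENNReal.ofReal (δ * r ^ n) ≤ μH[n] (E ∩ Γ ∩ closedBall x r)

/-- The coordinate subspace `ℝⁿ × {0} ⊆ ℝ^d`. -/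
def coordSubspace (d n : ℕ) : Submodule ℝ (Euc d) where
  carrier := {x | ∀ i : Fin d, n ≤ (i : ℕ) → x i = 0}
  add_mem' := by
    intro a b ha hb i hi
    simp [PiLp.add_apply, ha i hi, hb i hi]
  zero_mem' := by intro i hi; rfl
  smul_mem' := by
    intro c a ha i hi
    simp [PiLp.smul_apply, ha i hi]

/-- The closed ball of radius `ρ` around `W` in the Grassmannian `G(d,n)`, realised as a set
of subspaces of `ℝ^d`, with the metric `‖V - W‖ = ‖π_V - π_W‖` (operator norm). -/
def grBall {d : ℕ} (n : ℕ) (W : Submodule ℝ (Euc d)) (ρ : ℝ) : Set (Submodule ℝ (Euc d)) :=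
  {V | finrank ℝ V = n ∧ ‖projCLM V - projCLM W‖ ≤ ρ}

/-- The Borel σ-algebra on subspaces of `ℝ^d`, induced by `V ↦ π_V`. -/
instance grassMeasurableSpace (d : ℕ) : MeasurableSpace (Submodule ℝ (Euc d)) :=
  MeasurableSpace.comap (fun V => projCLM V) (borel (Euc d →L[ℝ] Euc d))

/-- The orthogonal group `O(d)`. -/
abbrev OG (d : ℕ) := Matrix.orthogonalGroup (Fin d) ℝ

instance (d : ℕ) : MeasurableSpace (OG d) := borel _

/-- `μ` is the Haar probability measure on the orthogonal group `O(d)`: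
a left-invariant Borel probability measure. -/
def IsHaarProb {d : ℕ} (μ : Measure (OG d)) : Prop :=
  IsProbabilityMeasure μ ∧ ∀ g : OG d, Measure.map (fun h => g * h) μ = μ

/-- The measure `γ_{d,n}` on the Grassmannian: the pushforward of the Haar probability
measure `μ` on `O(d)` under the map `g ↦ g(ℝⁿ × {0})`. -/
def grassmannOf {d : ℕ} (n : ℕ) (μ : Measure (OG d)) : Measure (Submodule ℝ (Euc d)) :=
  Measure.map
    (fun g : OG d => (coordSubspace d n).map
      (Matrix.toEuclideanLin (g : Matrix (Fin d) (Fin d) ℝ))) μ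

/-- The pushforward `π_{V♯}(Hⁿ|_E)` of `Hⁿ` restricted to `E` under the orthogonal
projection onto `V`. -/
def projPush {d : ℕ} (n : ℕ) (E : Set (Euc d)) (V : Submodule ℝ (Euc d)) : Measure (Euc d) :=
  Measure.map (projCLM V) (μH[n].restrict E)

/-- `Hⁿ` on the subspace `V`. -/
def hausdorffOn {d : ℕ} (n : ℕ) (V : Submodule ℝ (Euc d)) : Measure (Euc d) :=
  μH[n].restrict (V : Set (Euc d))

/-- The squared `L²(V)`-norm of the Radon–Nikodym derivative of `π_{V♯}(Hⁿ|_E)` with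
respect to `Hⁿ` on `V`. -/
def pushL2sq {d : ℕ} (n : ℕ) (E : Set (Euc d)) (V : Submodule ℝ (Euc d)) : ℝ≥0∞ :=
  ∫⁻ z, ((projPush n E V).rnDeriv (hausdorffOn n V) z) ^ 2 ∂(hausdorffOn n V)

/-- `π_{V♯}(Hⁿ|_E) ∈ L²(V)`: the pushforward is absolutely continuous with respect to `Hⁿ`
on `V`, with square-integrable density. -/
def MemL2 {d : ℕ} (n : ℕ) (E : Set (Euc d)) (V : Submodule ℝ (Euc d)) : Prop :=
  projPush n E V ≪ hausdorffOn n V ∧ pushL2sq n E V < ∞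

/-- The (two-sided) cone `X(x, V, α) = {y : |π_{V^⊥}(x - y)| ≤ α |x - y|}`. -/
def cone {d : ℕ} (V : Submodule ℝ (Euc d)) (x : Euc d) (α : ℝ) : Set (Euc d) :=
  {y | ‖projCLM Vᗮ (x - y)‖ ≤ α * ‖x - y‖}

/-- The truncated cone `X(x, V, α, R, r)`. -/
def coneAnn {d : ℕ} (V : Submodule ℝ (Euc d)) (x : Euc d) (α R r : ℝ) : Set (Euc d) :=
  cone V x α ∩ (closedBall x R \ ball x r)

/-- The vertical cone `X(x, α) := X(x, {0} × ℝ^{d-n}, α) = {y : |π_{ℝⁿ×{0}}(x-y)| ≤ α|x-y|}`. -/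
def vertCone {d : ℕ} (n : ℕ) (x : Euc d) (α : ℝ) : Set (Euc d) :=
  {y | ‖projCLM (coordSubspace d n) (x - y)‖ ≤ α * ‖x - y‖}

/-- The truncated vertical cone `X(x, α, R, r)`. -/
def vertConeAnn {d : ℕ} (n : ℕ) (x : Euc d) (α R r : ℝ) : Set (Euc d) :=
  vertCone n x α ∩ (closedBall x R \ ball x r)

/-- `E` satisfies the `n`-dimensional `(θ, M)`-property: for every `x ∈ E` at most `M`
dyadic scales `j` have `X(x, θ, 2^{-j}, 2^{-j-1}) ∩ E ≠ ∅`. -/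
def ThetaMProp {d : ℕ} (n : ℕ) (θ : ℝ) (M : ℕ) (E : Set (Euc d)) : Prop :=
  ∀ x ∈ E,
    {j : ℤ | (vertConeAnn n x θ (2 ^ (-j)) (2 ^ (-j - 1)) ∩ E).Nonempty}.Finite ∧
    {j : ℤ | (vertConeAnn n x θ (2 ^ (-j)) (2 ^ (-j - 1)) ∩ E).Nonempty}.ncard ≤ M

/-- The one-sided cone `X⁺(x, w, α)` in direction `w`. -/
def oneSidedCone {d : ℕ} (w : Euc d) (x : Euc d) (α : ℝ) : Set (Euc d) :=
  {y | ‖projCLM (Submodule.span ℝ {w})ᗮ (x - y)‖ ≤ α * ‖x - y‖ ∧ 0 ≤ ⟪y - x, w⟫}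

/-- The truncated one-sided cone `X⁺(x, w, α, R, r)`. -/
def oneSidedConeAnn {d : ℕ} (w : Euc d) (x : Euc d) (α R r : ℝ) : Set (Euc d) :=
  oneSidedCone w x α ∩ (closedBall x R \ ball x r)

/-- Combining `x ∈ ℝⁿ` and `y ∈ ℝ^{d-n}` into a point of `ℝ^d = ℝⁿ × ℝ^{d-n}`. -/
def pairFun {d n : ℕ} (x : Euc n) (y : Euc (d - n)) : Euc d :=
  WithLp.toLp 2 (fun (i : Fin d) => if h' : (i : ℕ) < n then x ⟨i, h'⟩ else y ⟨(i : ℕ) - n, by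
    have := i.isLt; omega⟩)


/-!
Cover the thin set by Vitali's `5r`-lemma with balls `B(x, r_x)` on which `E₁` has mass
`≤ ε r_xⁿ`, such that the balls `B(x, r_x / 5)` are disjoint. By Ahlfors–David regularity each
`B(x, r_x / 5)` carries `E₀`-mass `≳ r_xⁿ`, while together they lie in a ball of radius `3`,
whose `E₀`-mass is `≲ 1`.
Hence `Hⁿ(E_{1,ε}) ≤ ε ∑ r_xⁿ ≲ ε`.
-/

lemma subset_closedBall_of_ediam_le {X : Type*} [PseudoMetricSpace X] {E : Set X} {x : X}
    {r : ℝ} (hx : x ∈ E) (hr : 0 ≤ r) (h : Metric.ediam E ≤ ENNReal.ofReal r) :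
    E ⊆ closedBall x r := fun _ hy =>
  (edist_le_ofReal hr).1 ((Metric.edist_le_ediam_of_mem hy hx).trans h)

/-- Vitali's `5r`-covering: the thin balls covering `S` can be chosen with pairwise disjoint
fifths, and the `ν`-masses of those fifths add up inside `B`. -/
theorem measure_le_of_thin_closedBall_of_thick_closedBall {X : Type*} [MetricSpace X]
    [TopologicalSpace.SeparableSpace X] [MeasurableSpace X] [OpensMeasurableSpace X]
    (μ ν : Measure X)
    {S B : Set X} {r : X → ℝ} {R a ε : ℝ} (n : ℕ) (ha : 0 < a)
    (hr0 : ∀ x ∈ S, 0 < r x) (hrR : ∀ x ∈ S, r x ≤ R)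
    (hthin : ∀ x ∈ S, μ (closedBall x (r x)) ≤ ENNReal.ofReal (ε * r x ^ n))
    (hthick : ∀ x ∈ S, ENNReal.ofReal (a * (r x / 5) ^ n) ≤ ν (closedBall x (r x / 5)))
    (hB : ∀ x ∈ S, closedBall x (r x / 5) ⊆ B) :
    μ S ≤ ENNReal.ofReal (5 ^ n * ε / a) * ν B := by
  obtain ⟨u, huS, hdisj, hcov⟩ :=
    Vitali.exists_disjoint_subfamily_covering_enlargement_closedBall S id (fun x => r x / 5)
      (R / 5) (fun x hx => by linarith [hrR x hx]) 5 (by norm_num)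
  simp only [id] at hdisj hcov
  have hu : u.Countable :=
    (hdisj.mono fun _ => ball_subset_closedBall).countable_of_isOpen (fun _ _ => isOpen_ball)
      fun x hx => nonempty_ball.2 (by linarith [hr0 x (huS hx)])
  have hSu : S ⊆ ⋃ x ∈ u, closedBall x (r x) := fun y hy => by
    obtain ⟨x, hx, hyx⟩ := hcov y hy
    have hy' := hyx (mem_closedBall_self (by linarith [hr0 y hy]))
    rw [mul_div_cancel₀ _ (by norm_num : (5 : ℝ) ≠ 0)] at hy'
    exact mem_biUnion hx hy'
  have hball : ∀ x ∈ S, μ (closedBall x (r x)) ≤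
      ENNReal.ofReal (5 ^ n * ε / a) * ν (closedBall x (r x / 5)) := fun x hx =>
    calc μ (closedBall x (r x)) ≤ ENNReal.ofReal (ε * r x ^ n) := hthin x hx
      _ = ENNReal.ofReal (5 ^ n * ε / a) * ENNReal.ofReal (a * (r x / 5) ^ n) := by
        rw [← ENNReal.ofReal_mul' (by have := hr0 x hx; positivity), div_pow]
        field_simp
      _ ≤ _ := by gcongr; exact hthick x hx
  calc μ S ≤ ∑' x : u, μ (closedBall x (r x)) :=
        (measure_mono hSu).trans (measure_biUnion_le μ hu _)
    _ ≤ ∑' x : u, ENNReal.ofReal (5 ^ n * ε / a) * ν (closedBall x (r x / 5)) :=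
      ENNReal.tsum_le_tsum fun x => hball x (huS x.2)
    _ = ENNReal.ofReal (5 ^ n * ε / a) * ν (⋃ x ∈ u, closedBall x (r x / 5)) := by
      rw [ENNReal.tsum_mul_left, measure_biUnion hu hdisj fun _ _ => measurableSet_closedBall]
    _ ≤ _ := by gcongr; exact iUnion₂_subset fun x hx => hB x (huS hx)

namespace IsADR

variable {d n : ℕ} {C₁ C₂ : ℝ} {E : Set (Euc d)} {x : Euc d} {r : ℝ}

theorem hausdorffMeasure_inter_closedBall_le (hn : 0 < n) (hE : IsADR n C₁ C₂ E) (hx : x ∈ E)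
    (hr : 0 < r) : μH[n] (E ∩ closedBall x r) ≤ ENNReal.ofReal (C₂ * r ^ n) := by
  by_cases hrE : ENNReal.ofReal r ≤ Metric.ediam E
  · exact (hE.2.2 x hx r hr hrE).2
  push Not at hrE
  have hdiam : Metric.ediam E = ENNReal.ofReal (Metric.ediam E).toReal :=
    (ENNReal.ofReal_toReal (hrE.trans ENNReal.ofReal_lt_top).ne).symm
  obtain ⟨t, ht0, hEt, htE⟩ :
      ∃ t, 0 ≤ t ∧ E ⊆ closedBall x t ∧ Metric.ediam E = ENNReal.ofReal t :=
    ⟨_, ENNReal.toReal_nonneg, subset_closedBall_of_ediam_le hx ENNReal.toReal_nonneg hdiam.le,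
      hdiam⟩
  have htr : t ≤ r := by
    rw [htE] at hrE; exact (ENNReal.ofReal_lt_ofReal_iff hr).1 hrE |>.le
  have hC₂ : 0 ≤ C₂ := hE.1.le.trans hE.2.1
  calc μH[n] (E ∩ closedBall x r) ≤ μH[n] (E ∩ closedBall x t) := by
        rw [inter_eq_left.2 hEt]; exact measure_mono inter_subset_left
    _ ≤ ENNReal.ofReal (C₂ * t ^ n) := by
        rcases ht0.eq_or_lt with rfl | ht
        · have := Measure.nullSingletonClass_hausdorff (Euc d) (by positivity : (0 : ℝ) < n)
          rw [closedBall_zero, measure_mono_null inter_subset_right (measure_singleton x)]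
          exact bot_le
        · exact (hE.2.2 x hx t ht htE.ge).2
    _ ≤ ENNReal.ofReal (C₂ * r ^ n) := by gcongr

/-- Below the diameter this is the ADR lower bound; above it, the ball contains all of `E`. -/
theorem le_hausdorffMeasure_inter_closedBall {c : ℝ} (hE : IsADR n C₁ C₂ E) (hc : 0 ≤ c)
    (hcE : ENNReal.ofReal c ≤ μH[n] E) (hx : x ∈ E) (hr : 0 < r) (hr1 : r ≤ 1) :
    ENNReal.ofReal (min C₁ c * r ^ n) ≤ μH[n] (E ∩ closedBall x r) := by
  by_cases hrE : ENNReal.ofReal r ≤ Metric.ediam E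
  · refine le_trans ?_ (hE.2.2 x hx r hr hrE).1
    gcongr
    exact min_le_left _ _
  push Not at hrE
  rw [inter_eq_left.2 (subset_closedBall_of_ediam_le hx hr.le hrE.le)]
  refine le_trans (ENNReal.ofReal_le_ofReal ?_) hcE
  calc min C₁ c * r ^ n ≤ c * r ^ n := by gcongr; exact min_le_right _ _
    _ ≤ c := mul_le_of_le_one_right hc (pow_le_one₀ hr.le hr1)

end IsADR

theorem stmt5_general (n d : ℕ) (hn : 1 ≤ n) (c C₁ C₂ : ℝ) (hc : 0 < c) :
    ∃ K : ℝ, 0 < K ∧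
      ∀ ε : ℝ, 0 < ε →
        ∀ E₀ E₁ : Set (Euc d), IsADR n C₁ C₂ E₀ → ENNReal.ofReal c ≤ μH[n] E₀ →
          MeasurableSet E₁ → E₁ ⊆ E₀ ∩ closedBall 0 1 →
          μH[n] {x ∈ E₁ | ∃ r : ℝ, 0 < r ∧ r ≤ 1 ∧
              μH[n] (E₁ ∩ closedBall x r) ≤ ENNReal.ofReal (ε * r ^ n)} ≤
            ENNReal.ofReal (K * ε) := by
  by_cases hC : 0 < C₁ ∧ C₁ ≤ C₂
  swap
  · exact ⟨1, one_pos, fun _ _ E₀ _ hE₀ => absurd ⟨hE₀.1, hE₀.2.1⟩ hC⟩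
  have ha : 0 < min C₁ c := lt_min hC.1 hc
  refine ⟨15 ^ n * C₂ / min C₁ c, div_pos (by have := hC.1.trans_le hC.2; positivity) ha, ?_⟩
  intro ε hε E₀ E₁ hE₀ hcE₀ _ hE₁
  set S := {x ∈ E₁ | ∃ r : ℝ, 0 < r ∧ r ≤ 1 ∧
    μH[n] (E₁ ∩ closedBall x r) ≤ ENNReal.ofReal (ε * r ^ n)}
  rcases S.eq_empty_or_nonempty with hS | ⟨x₀, hx₀⟩
  · simp [hS]
  choose! r hr0 hr1 hthin using fun x (hx : x ∈ S) => hx.2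
  have hSE : ∀ x ∈ S, x ∈ E₀ ∩ closedBall 0 1 := fun x hx => hE₁ hx.1
  have hB : ∀ x ∈ S, closedBall x (r x / 5) ⊆ closedBall x₀ 3 := fun x hx =>
    closedBall_subset_closedBall' <| by
      linarith [hr1 x hx, dist_triangle_right x x₀ 0, mem_closedBall.1 (hSE x hx).2,
        mem_closedBall.1 (hSE x₀ hx₀).2]
  calc μH[n] S ≤ μH[n].restrict E₁ S := by
        simpa [inter_eq_left.2 fun x (hx : x ∈ S) => hx.1] using Measure.le_restrict_apply E₁ S
    _ ≤ ENNReal.ofReal (5 ^ n * ε / min C₁ c) * μH[n].restrict E₀ (closedBall x₀ 3) := by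
        refine measure_le_of_thin_closedBall_of_thick_closedBall _ _ n ha hr0 hr1
          (fun x hx => ?_) (fun x hx => ?_) hB
        · rw [Measure.restrict_apply measurableSet_closedBall, inter_comm]; exact hthin x hx
        · rw [Measure.restrict_apply measurableSet_closedBall, inter_comm]
          exact hE₀.le_hausdorffMeasure_inter_closedBall hc.le hcE₀ (hSE x hx).1
            (by linarith [hr0 x hx]) (by linarith [hr1 x hx])
    _ ≤ ENNReal.ofReal (5 ^ n * ε / min C₁ c) * ENNReal.ofReal (C₂ * 3 ^ n) := by
        rw [Measure.restrict_apply measurableSet_closedBall, inter_comm]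
        gcongr
        exact hE₀.hausdorffMeasure_inter_closedBall_le hn (hSE x₀ hx₀).1 (by norm_num)
    _ = ENNReal.ofReal (15 ^ n * C₂ / min C₁ c * ε) := by
        rw [← ENNReal.ofReal_mul (by positivity), show (15 : ℝ) ^ n = 5 ^ n * 3 ^ n by
          rw [← mul_pow]; norm_num]
        ring_nf

/-- the auxiliary lemma. The set of points of `E₁` around which `E₁` is
`ε`-thin at some scale `≤ 1` has measure `≲ ε`. -/
theorem stmt5 (n d : ℕ) (hn : 1 ≤ n) (hnd : n < d) (c C₁ C₂ : ℝ) (hc : 0 < c) :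
    ∃ K : ℝ, 0 < K ∧
      ∀ ε : ℝ, 0 < ε →
        ∀ E₀ E₁ : Set (Euc d), IsADR n C₁ C₂ E₀ → ENNReal.ofReal c ≤ μH[n] E₀ →
          MeasurableSet E₁ → E₁ ⊆ E₀ ∩ closedBall 0 1 →
          μH[n] {x ∈ E₁ | ∃ r : ℝ, 0 < r ∧ r ≤ 1 ∧
              μH[n] (E₁ ∩ closedBall x r) ≤ ENNReal.ofReal (ε * r ^ n)} ≤
            ENNReal.ofReal (K * ε) :=
  stmt5_general n d hn c C₁ C₂ hc

end
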